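/- For every u in the open interval (1/√3, √3), the product ψ₁(u)·ψ₂(u) satisfies 27/16 ≤ ψ₁(u)·ψ₂(u) ≤ 9/4; consequently 1 − 4·ψ₁(u)·ψ₂(u) ≤ −23/4 < 0. -/

import Mathlib

/-!
Write `v = √(1 + u²)`, `m = m(u)`, `X = psiDen u v m` and `B = psiNum u v m`. The equation
defining `m` is exactly what makes `μ = 4 α X`, so that `ψ₁ = 1 + r` and `ψ₂ = 2 - r` with
`r = B / X`; hence `ψ₁ ψ₂ = 9/4 - (r - 1/2)²` and it suffices to show `-1/4 ≤ r ≤ 5/4`.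
Modulo `v² = 1 + u²`, both `4B + X` and `5X - 4B` are `3 / v⁵` times a quadratic in `m` whose
outer coefficients `u²(3u² - 1), 3 - u²` resp. `u²(3 - u²), 3u² - 1` are positive exactly for
`1/√3 < u < √3`. For `4B + X` the middle coefficient is nonnegative too; for `5X - 4B` an
AM-GM step absorbs it, leaving a one-variable inequality that holds for all `u ≥ 0`.
So, apart from `μ = 4 α X`, the bounds on `r` hold for every `m ≥ 0`.
-/

noncomputable def mParam (u : ℝ) : ℝ :=
  (8 * u ^ 3 - u ^ 3 * (1 + u ^ 2) ^ ((3 : ℝ) / 2)) /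
    (8 * u ^ 3 - (1 + u ^ 2) ^ ((3 : ℝ) / 2))

noncomputable def alphaParam (u : ℝ) : ℝ :=
  Real.sqrt (2 * mParam u * u ^ 2 + 2)

noncomputable def muParam (u : ℝ) : ℝ :=
  4 * mParam u * alphaParam u / Real.sqrt (1 + u ^ 2) +
    alphaParam u * (mParam u) ^ 2 / (2 * u) + alphaParam u / 2

noncomputable def phi1 (u : ℝ) : ℝ :=
  1 + 2 * (mParam u + 1) * (alphaParam u) ^ 3 * (2 - u ^ 2) /
    (muParam u * (1 + u ^ 2) ^ ((5 : ℝ) / 2))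

noncomputable def phi2 (u : ℝ) : ℝ :=
  1 + 2 * (mParam u + 1) * (alphaParam u) ^ 3 * (2 * u ^ 2 - 1) /
    (muParam u * (1 + u ^ 2) ^ ((5 : ℝ) / 2))

noncomputable def psi1 (u : ℝ) : ℝ :=
  1 + (4 * alphaParam u / muParam u) *
    ((2 * (mParam u) ^ 2 * u ^ 4 + (6 * mParam u - (mParam u) ^ 2 - 1) * u ^ 2 + 2) /
        (1 + u ^ 2) ^ ((5 : ℝ) / 2) -
      mParam u * u ^ 2 / 8 - mParam u / (8 * u ^ 3))

noncomputable def psi2 (u : ℝ) : ℝ :=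
  1 + (4 * alphaParam u / muParam u) *
    ((-(mParam u) ^ 2 * u ^ 4 + (2 * (mParam u) ^ 2 - 6 * mParam u + 2) * u ^ 2 - 1) /
        (1 + u ^ 2) ^ ((5 : ℝ) / 2) +
      mParam u * u ^ 2 / 4 + mParam u / (4 * u ^ 3))

open Real

noncomputable def psiDen (u v M : ℝ) : ℝ :=
  (M ^ 2 * u ^ 2 + 1) / v ^ 3 + M * u ^ 2 / 8 + M / (8 * u ^ 3)

noncomputable def psiNum (u v M : ℝ) : ℝ :=
  (2 * M ^ 2 * u ^ 4 + (6 * M - M ^ 2 - 1) * u ^ 2 + 2) / v ^ 5 - M * u ^ 2 / 8 - M / (8 * u ^ 3)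

section
variable {u v M : ℝ}

lemma psiDen_pos (hu : 0 < u) (hv : 0 < v) (hM : 0 ≤ M) : 0 < psiDen u v M := by
  rw [psiDen]; positivity

lemma psiDen_eq (hv : v ≠ 0) (hv2 : v ^ 2 = 1 + u ^ 2) :
    psiDen u v M = (M ^ 2 * u ^ 2 + 1) * (1 + u ^ 2) / v ^ 5 + M * u ^ 2 / 8 + M / (8 * u ^ 3) := by
  rw [psiDen, ← hv2]; field_simp

lemma psiDen_sub_psiNum (hu : u ≠ 0) (hv : v ≠ 0) (hv2 : v ^ 2 = 1 + u ^ 2) :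
    psiDen u v M - psiNum u v M =
      (-M ^ 2 * u ^ 4 + (2 * M ^ 2 - 6 * M + 2) * u ^ 2 - 1) / v ^ 5 + M * u ^ 2 / 4 + M / (4 * u ^ 3) := by
  rw [psiDen_eq hv hv2, psiNum]; field_simp; ring

lemma four_mul_psiNum_add_psiDen (hu : u ≠ 0) (hv : v ≠ 0) (hv2 : v ^ 2 = 1 + u ^ 2) :
    4 * psiNum u v M + psiDen u v M =
      3 / v ^ 5 * (u ^ 2 * (3 * u ^ 2 - 1) * M ^ 2 + (8 * u ^ 2 - v ^ 5 * (u ^ 5 + 1) / (8 * u ^ 3)) * M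
        + (3 - u ^ 2)) := by
  rw [psiDen_eq hv hv2, psiNum]; field_simp; ring

lemma five_mul_psiDen_sub_four_mul_psiNum (hu : u ≠ 0) (hv : v ≠ 0) (hv2 : v ^ 2 = 1 + u ^ 2) :
    5 * psiDen u v M - 4 * psiNum u v M =
      3 / v ^ 5 * (u ^ 2 * (3 - u ^ 2) * M ^ 2 + (3 * v ^ 5 * (u ^ 5 + 1) / (8 * u ^ 3) - 8 * u ^ 2) * M
        + (3 * u ^ 2 - 1)) := by
  rw [psiDen_eq hv hv2, psiNum]; field_simp; ring

/-- AM-GM for the outer coefficients of `5X - 4B`: their product is `u²` times the middle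
coefficient `(3 - u²)(3u² - 1) = 4u² - 3(u² - 1)²`. -/
lemma amgm_quadratic_nonneg (h1 : 1 ≤ 3 * u ^ 2) (h3 : u ^ 2 ≤ 3) (M : ℝ) :
    0 ≤ u ^ 2 * (3 - u ^ 2) * M ^ 2 - (3 - u ^ 2) * (3 * u ^ 2 - 1) * M + (3 * u ^ 2 - 1) := by
  have hu : 0 < u ^ 2 := by linarith
  have hp := sub_nonneg.2 h3
  have hq := sub_nonneg.2 h1
  have hsos : 4 * u ^ 2 *
      (u ^ 2 * (3 - u ^ 2) * M ^ 2 - (3 - u ^ 2) * (3 * u ^ 2 - 1) * M + (3 * u ^ 2 - 1)) =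
        (3 - u ^ 2) * (2 * u ^ 2 * M - (3 * u ^ 2 - 1)) ^ 2 +
          3 * (3 * u ^ 2 - 1) * (u ^ 2 - 1) ^ 2 := by ring
  have : 0 ≤ (3 - u ^ 2) * (2 * u ^ 2 * M - (3 * u ^ 2 - 1)) ^ 2 +
      3 * (3 * u ^ 2 - 1) * (u ^ 2 - 1) ^ 2 := by positivity
  nlinarith

lemma neg_quarter_le_psiNum_div_psiDen (hu : 0 < u) (hv : 0 < v) (hv2 : v ^ 2 = 1 + u ^ 2)
    (h1 : 1 ≤ 3 * u ^ 2) (h3 : u ^ 2 ≤ 3) (hM : 0 ≤ M) (hkey : v ^ 5 * (u ^ 5 + 1) ≤ 64 * u ^ 5) :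
    -(1 / 4) ≤ psiNum u v M / psiDen u v M := by
  rw [le_div_iff₀ (psiDen_pos hu hv hM)]
  have hmid : 0 ≤ 8 * u ^ 2 - v ^ 5 * (u ^ 5 + 1) / (8 * u ^ 3) := by
    rw [sub_nonneg, div_le_iff₀ (by positivity)]; linarith
  have hquad : 0 ≤ u ^ 2 * (3 * u ^ 2 - 1) * M ^ 2 +
      (8 * u ^ 2 - v ^ 5 * (u ^ 5 + 1) / (8 * u ^ 3)) * M + (3 - u ^ 2) := by
    have := mul_nonneg (mul_nonneg (sq_nonneg u) (sub_nonneg.2 h1)) (sq_nonneg M)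
    nlinarith [mul_nonneg hmid hM]
  have := four_mul_psiNum_add_psiDen (M := M) hu.ne' hv.ne' hv2
  nlinarith [mul_nonneg (by positivity : (0 : ℝ) ≤ 3 / v ^ 5) hquad]

lemma psiNum_div_psiDen_le_five_quarters (hu : 0 < u) (hv : 0 < v) (hv2 : v ^ 2 = 1 + u ^ 2)
    (h1 : 1 ≤ 3 * u ^ 2) (h3 : u ^ 2 ≤ 3) (hM : 0 ≤ M)
    (hkey : 8 * u ^ 3 * (4 * u ^ 2 + 3 * (u ^ 2 - 1) ^ 2) ≤ 3 * v ^ 5 * (u ^ 5 + 1)) :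
    psiNum u v M / psiDen u v M ≤ 5 / 4 := by
  rw [div_le_iff₀ (psiDen_pos hu hv hM)]
  have hmid : 0 ≤ 3 * v ^ 5 * (u ^ 5 + 1) / (8 * u ^ 3) - 8 * u ^ 2 + (3 - u ^ 2) * (3 * u ^ 2 - 1) := by
    have : 8 * u ^ 2 - (3 - u ^ 2) * (3 * u ^ 2 - 1) ≤ 3 * v ^ 5 * (u ^ 5 + 1) / (8 * u ^ 3) := by
      rw [le_div_iff₀ (by positivity)]; linarith
    linarith
  have hquad : 0 ≤ u ^ 2 * (3 - u ^ 2) * M ^ 2 +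
      (3 * v ^ 5 * (u ^ 5 + 1) / (8 * u ^ 3) - 8 * u ^ 2) * M + (3 * u ^ 2 - 1) := by
    nlinarith [amgm_quadratic_nonneg h1 h3 M, mul_nonneg hmid hM]
  have := five_mul_psiDen_sub_four_mul_psiNum (M := M) hu.ne' hv.ne' hv2
  nlinarith [mul_nonneg (by positivity : (0 : ℝ) ≤ 3 / v ^ 5) hquad]

lemma pos_and_sq_bounds (hu1 : 1 / √3 < u) (hu2 : u < √3) :
    0 < u ∧ 1 < 3 * u ^ 2 ∧ u ^ 2 < 3 := by
  have hu : 0 < u := lt_trans (by positivity) hu1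
  refine ⟨hu, ?_, (lt_sqrt hu.le).1 hu2⟩
  rw [one_div, ← sqrt_inv, sqrt_lt' hu] at hu1
  linarith

lemma sqrt_one_add_sq_lt_two_mul (hu : 0 < u) (h1 : 1 < 3 * u ^ 2) :
    √(1 + u ^ 2) < 2 * u :=
  (sqrt_lt' (by positivity)).2 (by linarith)

lemma sqrt_one_add_sq_lt_two (h3 : u ^ 2 < 3) : √(1 + u ^ 2) < 2 :=
  (sqrt_lt' (by norm_num)).2 (by linarith)

lemma sqrt_one_add_sq_pow_five_mul_le (hu : 0 < u) (h1 : 1 < 3 * u ^ 2) (h3 : u ^ 2 < 3) :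
    √(1 + u ^ 2) ^ 5 * (u ^ 5 + 1) ≤ 64 * u ^ 5 := by
  have hv := sqrt_nonneg (1 + u ^ 2)
  have h2u : √(1 + u ^ 2) ^ 5 ≤ (2 * u) ^ 5 :=
    pow_le_pow_left₀ hv (sqrt_one_add_sq_lt_two_mul hu h1).le 5
  have h2 : √(1 + u ^ 2) ^ 5 ≤ 2 ^ 5 := pow_le_pow_left₀ hv (sqrt_one_add_sq_lt_two h3).le 5
  rcases le_total u 1 with hu1 | hu1
  · have : u ^ 5 ≤ 1 := pow_le_one₀ hu.le hu1
    nlinarith [pow_pos hu 5]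
  · have : 1 ≤ u ^ 5 := one_le_pow₀ hu1
    nlinarith [pow_pos hu 5]

/-- After squaring, both sides scale by `u¹⁰` under `u ↦ 1/u`; in the invariant
`(u - 1)² / u = u + 1/u - 2` the difference has positive coefficients. -/
lemma le_three_mul_sqrt_one_add_sq_pow_five (hu : 0 ≤ u) :
    8 * u ^ 3 * (4 * u ^ 2 + 3 * (u ^ 2 - 1) ^ 2) ≤ 3 * √(1 + u ^ 2) ^ 5 * (u ^ 5 + 1) := by
  have hv : √(1 + u ^ 2) ^ 2 = 1 + u ^ 2 := sq_sqrt (by positivity)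
  have hv10 : √(1 + u ^ 2) ^ 10 = (1 + u ^ 2) ^ 5 := by
    rw [show 10 = 2 * 5 from rfl, pow_mul, hv]
  refine (abs_le_of_sq_le_sq' ?_ (by positivity)).2
  have hdiff : (3 * √(1 + u ^ 2) ^ 5 * (u ^ 5 + 1)) ^ 2 -
      (8 * u ^ 3 * (4 * u ^ 2 + 3 * (u ^ 2 - 1) ^ 2)) ^ 2 =
        128 * u ^ 10 + 3936 * u ^ 9 * (u - 1) ^ 2 + 24528 * u ^ 8 * (u - 1) ^ 4
        + 60912 * u ^ 7 * (u - 1) ^ 6 + 72864 * u ^ 6 * (u - 1) ^ 8 + 52974 * u ^ 5 * (u - 1) ^ 10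
        + 25245 * u ^ 4 * (u - 1) ^ 12 + 7920 * u ^ 3 * (u - 1) ^ 14 + 1575 * u ^ 2 * (u - 1) ^ 16
        + 180 * u * (u - 1) ^ 18 + 9 * (u - 1) ^ 20 := by
    linear_combination 9 * (u ^ 5 + 1) ^ 2 * hv10
  have : 0 ≤ (3 * √(1 + u ^ 2) ^ 5 * (u ^ 5 + 1)) ^ 2 -
      (8 * u ^ 3 * (4 * u ^ 2 + 3 * (u ^ 2 - 1) ^ 2)) ^ 2 := by
    rw [hdiff]; positivity
  linarith

lemma one_add_sq_rpow_three_halves : (1 + u ^ 2) ^ ((3 : ℝ) / 2) = √(1 + u ^ 2) ^ 3 := by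
  rw [rpow_div_two_eq_sqrt _ (by positivity), rpow_ofNat]

lemma one_add_sq_rpow_five_halves : (1 + u ^ 2) ^ ((5 : ℝ) / 2) = √(1 + u ^ 2) ^ 5 := by
  rw [rpow_div_two_eq_sqrt _ (by positivity), rpow_ofNat]

lemma mParam_mul (hu : 0 < u) (h1 : 1 < 3 * u ^ 2) :
    mParam u * (8 * u ^ 3 - √(1 + u ^ 2) ^ 3) = u ^ 3 * (8 - √(1 + u ^ 2) ^ 3) := by
  have : √(1 + u ^ 2) ^ 3 < (2 * u) ^ 3 :=
    pow_lt_pow_left₀ (sqrt_one_add_sq_lt_two_mul hu h1) (sqrt_nonneg _) (by norm_num)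
  rw [mParam, one_add_sq_rpow_three_halves, div_mul_cancel₀ _ (by nlinarith)]
  ring

lemma mParam_pos (hu : 0 < u) (h1 : 1 < 3 * u ^ 2) (h3 : u ^ 2 < 3) : 0 < mParam u := by
  have hv := sqrt_nonneg (1 + u ^ 2)
  have h2u : √(1 + u ^ 2) ^ 3 < (2 * u) ^ 3 :=
    pow_lt_pow_left₀ (sqrt_one_add_sq_lt_two_mul hu h1) hv (by norm_num)
  have h2 : √(1 + u ^ 2) ^ 3 < 2 ^ 3 := pow_lt_pow_left₀ (sqrt_one_add_sq_lt_two h3) hv (by norm_num)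
  rw [mParam, one_add_sq_rpow_three_halves]
  apply div_pos <;> nlinarith [pow_pos hu 3]

lemma alphaParam_pos (hM : 0 ≤ mParam u) : 0 < alphaParam u :=
  sqrt_pos.2 (by positivity)

lemma muParam_eq (hu : 0 < u) (h1 : 1 < 3 * u ^ 2) :
    muParam u = 4 * alphaParam u * psiDen u √(1 + u ^ 2) (mParam u) := by
  have hv : 0 < √(1 + u ^ 2) := sqrt_pos.2 (by positivity)
  have hv2 : √(1 + u ^ 2) ^ 2 = 1 + u ^ 2 := sq_sqrt (by positivity)
  have hM := mParam_mul hu h1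
  rw [muParam]
  set v := √(1 + u ^ 2)
  set M := mParam u
  have hfactor : 4 * M * alphaParam u / v + alphaParam u * M ^ 2 / (2 * u) + alphaParam u / 2 -
      4 * alphaParam u * psiDen u v M = alphaParam u * (1 - M * u ^ 2) *
        (M * (8 * u ^ 3 - v ^ 3) - u ^ 3 * (8 - v ^ 3)) / (2 * u ^ 3 * v ^ 3) := by
    rw [psiDen]
    field_simp
    linear_combination 64 * alphaParam u * M * u ^ 3 * hv2
  rwa [hM, sub_self, mul_zero, zero_div, sub_eq_zero] at hfactor

lemma psi1_eq (hu : 0 < u) (h1 : 1 < 3 * u ^ 2) (h3 : u ^ 2 < 3) :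
    psi1 u = 1 + psiNum u √(1 + u ^ 2) (mParam u) / psiDen u √(1 + u ^ 2) (mParam u) := by
  have hM := (mParam_pos hu h1 h3).le
  have hα := (alphaParam_pos hM).ne'
  have hX := (psiDen_pos hu (sqrt_pos.2 (by positivity)) hM).ne'
  rw [psi1, one_add_sq_rpow_five_halves, muParam_eq hu h1, psiNum]
  field_simp

lemma psi2_eq (hu : 0 < u) (h1 : 1 < 3 * u ^ 2) (h3 : u ^ 2 < 3) :
    psi2 u = 2 - psiNum u √(1 + u ^ 2) (mParam u) / psiDen u √(1 + u ^ 2) (mParam u) := by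
  have hM := (mParam_pos hu h1 h3).le
  have hα := (alphaParam_pos hM).ne'
  have hv : 0 < √(1 + u ^ 2) := sqrt_pos.2 (by positivity)
  have hX := (psiDen_pos hu hv hM).ne'
  rw [psi2, one_add_sq_rpow_five_halves, muParam_eq hu h1,
    ← psiDen_sub_psiNum hu.ne' hv.ne' (sq_sqrt (by positivity))]
  field_simp
  ring

end

/-- Bounds for `ψ₁(u)·ψ₂(u)` on `(1/√3, √3)`, and the consequence
`1 - 4 ψ₁ ψ₂ ≤ -23/4 < 0`. -/
theorem psi_prod_bounds (u : ℝ) (hu1 : 1 / Real.sqrt 3 < u) (hu2 : u < Real.sqrt 3) :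
    27 / 16 ≤ psi1 u * psi2 u ∧ psi1 u * psi2 u ≤ 9 / 4 ∧
    1 - 4 * (psi1 u * psi2 u) ≤ -(23 / 4) ∧ 1 - 4 * (psi1 u * psi2 u) < 0 := by
  obtain ⟨hu, h1, h3⟩ := pos_and_sq_bounds hu1 hu2
  have hv : 0 < √(1 + u ^ 2) := sqrt_pos.2 (by positivity)
  have hv2 : √(1 + u ^ 2) ^ 2 = 1 + u ^ 2 := sq_sqrt (by positivity)
  have hM := (mParam_pos hu h1 h3).le
  rw [psi1_eq hu h1 h3, psi2_eq hu h1 h3]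
  set r := psiNum u √(1 + u ^ 2) (mParam u) / psiDen u √(1 + u ^ 2) (mParam u)
  have hr1 : -(1 / 4) ≤ r := neg_quarter_le_psiNum_div_psiDen hu hv hv2 h1.le h3.le hM
    (sqrt_one_add_sq_pow_five_mul_le hu h1 h3)
  have hr2 : r ≤ 5 / 4 := psiNum_div_psiDen_le_five_quarters hu hv hv2 h1.le h3.le hM
    (le_three_mul_sqrt_one_add_sq_pow_five hu.le)
  have hlow : 27 / 16 ≤ (1 + r) * (2 - r) := by nlinarith
  have hhigh : (1 + r) * (2 - r) ≤ 9 / 4 := by nlinarith [sq_nonneg (r - 1 / 2)]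
  exact ⟨hlow, hhigh, by linarith, by linarith⟩
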